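/- Let H = H₁ ⊕ H₂ with Ω = [[Ω₁, Γ],[Γ†, Ω₂]] self-adjoint on a finite-dimensional space. Then the smallest Ω-invariant subspace containing H₁ is H₁ ⊕ H₂c where H₂c = O_{Ω₂}(range Γ†); in particular O_Ω(H₁) ∩ H₂ = O_{Ω₂}(range Γ†). -/
import Mathlib


noncomputable section

open LinearMap Module

/-- The smallest `Ω`-invariant subspace containing a subset `S`. -/
def orbit {H : Type*} [NormedAddCommGroup H] [InnerProductSpace ℂ H]
    (Ω : H →ₗ[ℂ] H) (S : Set H) : Submodule ℂ H :=
  sInf {W : Submodule ℂ H | S ⊆ (W : Set H) ∧ ∀ x ∈ W, Ω x ∈ W}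

theorem orbit_invariant {H : Type*} [NormedAddCommGroup H] [InnerProductSpace ℂ H]
    (Ω : H →ₗ[ℂ] H) (S : Set H) : ∀ x ∈ orbit Ω S, Ω x ∈ orbit Ω S := by
  intro x hx
  simp only [orbit, Submodule.mem_sInf] at hx ⊢
  intro W hW
  exact hW.2 x (hx W hW)

variable (H₁ H₂ : Type*)
  [NormedAddCommGroup H₁] [InnerProductSpace ℂ H₁] [FiniteDimensional ℂ H₁]
  [NormedAddCommGroup H₂] [InnerProductSpace ℂ H₂] [FiniteDimensional ℂ H₂]

/-- The orthogonal direct sum `H = H₁ ⊕ H₂`. -/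
abbrev DirSum := WithLp 2 (H₁ × H₂)

/-- Isometric embedding of `H₁` into `H₁ ⊕ H₂`. -/
def emb1 : H₁ →ₗ[ℂ] DirSum H₁ H₂ :=
  (WithLp.linearEquiv 2 ℂ (H₁ × H₂)).symm.toLinearMap ∘ₗ LinearMap.inl ℂ H₁ H₂

/-- Isometric embedding of `H₂` into `H₁ ⊕ H₂`. -/
def emb2 : H₂ →ₗ[ℂ] DirSum H₁ H₂ :=
  (WithLp.linearEquiv 2 ℂ (H₁ × H₂)).symm.toLinearMap ∘ₗ LinearMap.inr ℂ H₁ H₂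

/-- Projection of `H₁ ⊕ H₂` onto the first coordinate. -/
def proj1 : DirSum H₁ H₂ →ₗ[ℂ] H₁ :=
  LinearMap.fst ℂ H₁ H₂ ∘ₗ (WithLp.linearEquiv 2 ℂ (H₁ × H₂)).toLinearMap

/-- Projection of `H₁ ⊕ H₂` onto the second coordinate. -/
def proj2 : DirSum H₁ H₂ →ₗ[ℂ] H₂ :=
  LinearMap.snd ℂ H₁ H₂ ∘ₗ (WithLp.linearEquiv 2 ℂ (H₁ × H₂)).toLinearMap

/-- The copy of `H₁` inside `H₁ ⊕ H₂`. -/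
def sub1 : Submodule ℂ (DirSum H₁ H₂) := LinearMap.range (emb1 H₁ H₂)

/-- The copy of `H₂` inside `H₁ ⊕ H₂`. -/
def sub2 : Submodule ℂ (DirSum H₁ H₂) := LinearMap.range (emb2 H₁ H₂)

variable {H₁ H₂}

/-- The block operator `Ω = [[Ω₁, Γ], [Γ†, Ω₂]]` acting on `H₁ ⊕ H₂` by
`Ω(v₁, v₂) = (Ω₁ v₁ + Γ v₂, Γ† v₁ + Ω₂ v₂)`. -/
def blockOp (Ω₁ : H₁ →ₗ[ℂ] H₁) (Ω₂ : H₂ →ₗ[ℂ] H₂) (Γ : H₂ →ₗ[ℂ] H₁) :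
    DirSum H₁ H₂ →ₗ[ℂ] DirSum H₁ H₂ :=
  emb1 H₁ H₂ ∘ₗ (Ω₁ ∘ₗ proj1 H₁ H₂ + Γ ∘ₗ proj2 H₁ H₂) +
    emb2 H₁ H₂ ∘ₗ (LinearMap.adjoint Γ ∘ₗ proj1 H₁ H₂ + Ω₂ ∘ₗ proj2 H₁ H₂)


section Aux

lemma subset_orbit {H : Type*} [NormedAddCommGroup H] [InnerProductSpace ℂ H]
    (Ω : H →ₗ[ℂ] H) (S : Set H) : S ⊆ (orbit Ω S : Set H) := by
  intro s hs
  simp only [orbit, SetLike.mem_coe, Submodule.mem_sInf]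
  intro W hW
  exact hW.1 hs

lemma orbit_le {H : Type*} [NormedAddCommGroup H] [InnerProductSpace ℂ H]
    (Ω : H →ₗ[ℂ] H) (S : Set H) (W : Submodule ℂ H) (h1 : S ⊆ (W : Set H))
    (h2 : ∀ x ∈ W, Ω x ∈ W) : orbit Ω S ≤ W :=
  sInf_le ⟨h1, h2⟩

variable {H₁ H₂ : Type*}
  [NormedAddCommGroup H₁] [InnerProductSpace ℂ H₁] [FiniteDimensional ℂ H₁]
  [NormedAddCommGroup H₂] [InnerProductSpace ℂ H₂] [FiniteDimensional ℂ H₂]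

lemma proj1_emb1 (v : H₁) : proj1 H₁ H₂ (emb1 H₁ H₂ v) = v := rfl
lemma proj2_emb1 (v : H₁) : proj2 H₁ H₂ (emb1 H₁ H₂ v) = 0 := rfl
lemma proj1_emb2 (v : H₂) : proj1 H₁ H₂ (emb2 H₁ H₂ v) = 0 := rfl
lemma proj2_emb2 (v : H₂) : proj2 H₁ H₂ (emb2 H₁ H₂ v) = v := rfl

lemma blockOp_apply (Ω₁ : H₁ →ₗ[ℂ] H₁) (Ω₂ : H₂ →ₗ[ℂ] H₂) (Γ : H₂ →ₗ[ℂ] H₁)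
    (x : DirSum H₁ H₂) :
    blockOp Ω₁ Ω₂ Γ x =
      emb1 H₁ H₂ (Ω₁ (proj1 H₁ H₂ x) + Γ (proj2 H₁ H₂ x)) +
      emb2 H₁ H₂ (LinearMap.adjoint Γ (proj1 H₁ H₂ x) + Ω₂ (proj2 H₁ H₂ x)) := by
  simp [blockOp]

lemma blockOp_emb1 (Ω₁ : H₁ →ₗ[ℂ] H₁) (Ω₂ : H₂ →ₗ[ℂ] H₂) (Γ : H₂ →ₗ[ℂ] H₁)
    (v : H₁) :
    blockOp Ω₁ Ω₂ Γ (emb1 H₁ H₂ v) =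
      emb1 H₁ H₂ (Ω₁ v) + emb2 H₁ H₂ (LinearMap.adjoint Γ v) := by
  rw [blockOp_apply, proj1_emb1, proj2_emb1]
  simp

lemma blockOp_emb2 (Ω₁ : H₁ →ₗ[ℂ] H₁) (Ω₂ : H₂ →ₗ[ℂ] H₂) (Γ : H₂ →ₗ[ℂ] H₁)
    (w : H₂) :
    blockOp Ω₁ Ω₂ Γ (emb2 H₁ H₂ w) =
      emb1 H₁ H₂ (Γ w) + emb2 H₁ H₂ (Ω₂ w) := by
  rw [blockOp_apply, proj1_emb2, proj2_emb2]
  simp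

end Aux

/-- The smallest `Ω`-invariant subspace of `H₁ ⊕ H₂` containing `H₁` is `H₁ ⊕ H₂c`, where
`H₂c = O_{Ω₂}(range Γ†)`; in particular `O_Ω(H₁) ∩ H₂ = H₂c` (embedded into `H₁ ⊕ H₂`). -/
theorem orbit_observable_eq_sup_coupled
    (Ω₁ : H₁ →ₗ[ℂ] H₁) (hΩ₁ : Ω₁.IsSymmetric)
    (Ω₂ : H₂ →ₗ[ℂ] H₂) (hΩ₂ : Ω₂.IsSymmetric)
    (Γ : H₂ →ₗ[ℂ] H₁) :
    orbit (blockOp Ω₁ Ω₂ Γ) (sub1 H₁ H₂ : Set (DirSum H₁ H₂))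
        = sub1 H₁ H₂ ⊔ Submodule.map (emb2 H₁ H₂)
            (orbit Ω₂ (Set.range (LinearMap.adjoint Γ))) ∧
    orbit (blockOp Ω₁ Ω₂ Γ) (sub1 H₁ H₂ : Set (DirSum H₁ H₂)) ⊓ sub2 H₁ H₂
        = Submodule.map (emb2 H₁ H₂) (orbit Ω₂ (Set.range (LinearMap.adjoint Γ))) := by

  set O₂ := orbit Ω₂ (Set.range (LinearMap.adjoint Γ)) with hO₂
  set W := sub1 H₁ H₂ ⊔ Submodule.map (emb2 H₁ H₂) O₂ with hW
  set Ω := blockOp Ω₁ Ω₂ Γ with hΩ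
  have hmem2 : ∀ b ∈ O₂, emb2 H₁ H₂ b ∈ W := fun b hb =>
    le_sup_right (α := Submodule ℂ (DirSum H₁ H₂)) ⟨b, hb, rfl⟩
  have hmem1 : ∀ a : H₁, emb1 H₁ H₂ a ∈ W := fun a =>
    le_sup_left (α := Submodule ℂ (DirSum H₁ H₂)) ⟨a, rfl⟩
  have hΓadj : ∀ v : H₁, LinearMap.adjoint Γ v ∈ O₂ := fun v =>
    subset_orbit Ω₂ _ ⟨v, rfl⟩
  have hle : orbit Ω (sub1 H₁ H₂ : Set (DirSum H₁ H₂)) ≤ W := by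
    apply orbit_le
    · exact fun x hx => le_sup_left (α := Submodule ℂ (DirSum H₁ H₂)) hx
    · intro x hx
      rw [Submodule.mem_sup] at hx
      obtain ⟨y, hy, z, hz, rfl⟩ := hx
      obtain ⟨a, rfl⟩ := hy
      obtain ⟨b, hb, rfl⟩ := hz
      rw [map_add, blockOp_emb1, blockOp_emb2]
      have h1 := hmem1 (Ω₁ a)
      have h2 := hmem2 _ (hΓadj a)
      have h3 := hmem1 (Γ b)
      have h4 := hmem2 _ (orbit_invariant Ω₂ _ b hb)
      exact add_mem (add_mem h1 h2) (add_mem h3 h4)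
  have hge : W ≤ orbit Ω (sub1 H₁ H₂ : Set (DirSum H₁ H₂)) := by
    apply sup_le
    · exact subset_orbit Ω _
    · rw [Submodule.map_le_iff_le_comap]
      apply orbit_le
      · rintro w ⟨v, rfl⟩
        have h1 : emb1 H₁ H₂ v ∈ orbit Ω (sub1 H₁ H₂ : Set (DirSum H₁ H₂)) :=
          subset_orbit Ω _ ⟨v, rfl⟩
        have h2 := orbit_invariant Ω (sub1 H₁ H₂ : Set (DirSum H₁ H₂)) _ h1
        rw [hΩ, blockOp_emb1] at h2
        have h3 : emb1 H₁ H₂ (Ω₁ v) ∈ orbit Ω (sub1 H₁ H₂ : Set (DirSum H₁ H₂)) :=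
          subset_orbit Ω _ ⟨Ω₁ v, rfl⟩
        have := sub_mem h2 h3
        simpa using this
      · intro w hw
        simp only [Submodule.mem_comap] at hw ⊢
        have h2 := orbit_invariant Ω (sub1 H₁ H₂ : Set (DirSum H₁ H₂)) _ hw
        rw [hΩ, blockOp_emb2] at h2
        have h3 : emb1 H₁ H₂ (Γ w) ∈ orbit Ω (sub1 H₁ H₂ : Set (DirSum H₁ H₂)) :=
          subset_orbit Ω _ ⟨Γ w, rfl⟩
        have := sub_mem h2 h3
        simpa using this
  have heq : orbit Ω (sub1 H₁ H₂ : Set (DirSum H₁ H₂)) = W := le_antisymm hle hge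
  refine ⟨heq, ?_⟩
  rw [heq]
  apply le_antisymm
  · intro x hx
    have hxW := Submodule.mem_sup.mp (Submodule.mem_inf.mp hx).1
    have hxs2 := (Submodule.mem_inf.mp hx).2
    obtain ⟨y, hy, z, hz, rfl⟩ := hxW
    obtain ⟨a, rfl⟩ := hy
    obtain ⟨b, hb, rfl⟩ := hz
    obtain ⟨c, hc⟩ := hxs2
    have ha : a = 0 := by
      have := congrArg (proj1 H₁ H₂) hc
      rw [map_add, proj1_emb1, proj1_emb2, proj1_emb2] at this
      simpa using this.symm
    subst ha
    refine ⟨b, hb, ?_⟩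
    simp
  · exact le_inf (fun x hx => by obtain ⟨b, hb, rfl⟩ := hx; exact hmem2 b hb)
      (fun x hx => by obtain ⟨b, hb, rfl⟩ := hx; exact ⟨b, rfl⟩)
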